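/- (Other Procreation) If O ∉ o(G) and O ∉ o(H), then P ∉ o(G+H), for three-player impartial games under normal play. -/
import Mathlib


inductive IGame : Type where
  | mk : List IGame → IGame

namespace IGame

def opts : IGame → List IGame
  | mk l => l

theorem sizeOf_lt_of_mem {g G : IGame} (h : g ∈ G.opts) : sizeOf g < sizeOf G := by
  cases G with
  | mk l =>
    have h2 : g ∈ l := h
    have := List.sizeOf_lt_of_mem h2
    simp only [mk.sizeOf_spec]
    omega

def add : IGame → IGame → IGame
  | G, H =>
    mk ((G.opts.attach.map fun g => add g.1 H) ++ (H.opts.attach.map fun h => add G h.1))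
termination_by G H => sizeOf G + sizeOf H
decreasing_by
  · have := sizeOf_lt_of_mem g.2; omega
  · have := sizeOf_lt_of_mem h.2; omega

inductive Player : Type where
  | N | O | P
  deriving DecidableEq

def out : IGame → Player → Prop
  | G, .N => ∃ g : {x // x ∈ G.opts}, out g.1 .P
  | G, .O => ∀ g : {x // x ∈ G.opts}, out g.1 .N
  | G, .P => ∀ g : {x // x ∈ G.opts}, out g.1 .O
termination_by G _ => sizeOf G
decreasing_by
  all_goals exact sizeOf_lt_of_mem g.2

theorem out_N {G : IGame} : out G .N ↔ ∃ g ∈ G.opts, out g .P := by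
  rw [out]
  exact ⟨fun ⟨g, h⟩ => ⟨g.1, g.2, h⟩, fun ⟨g, hm, h⟩ => ⟨⟨g, hm⟩, h⟩⟩

theorem out_O {G : IGame} : out G .O ↔ ∀ g ∈ G.opts, out g .N := by
  rw [out]
  exact ⟨fun h g hm => h ⟨g, hm⟩, fun h g => h g.1 g.2⟩

theorem out_P {G : IGame} : out G .P ↔ ∀ g ∈ G.opts, out g .O := by
  rw [out]
  exact ⟨fun h g hm => h ⟨g, hm⟩, fun h g => h g.1 g.2⟩

def outcome (G : IGame) : Set Player := {p | out G p}

def nim : Nat → IGame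
  | 0 => mk []
  | n+1 => mk ((nim n).opts ++ [nim n])

end IGame


namespace IGame

theorem mem_opts_add {x G H : IGame} :
    x ∈ (add G H).opts ↔ (∃ g ∈ G.opts, x = add g H) ∨ (∃ h ∈ H.opts, x = add G h) := by
  rw [add]
  simp [opts, List.mem_append, List.mem_map, List.mem_attach, eq_comm]

theorem add_left_mem {g G H : IGame} (hg : g ∈ G.opts) : add g H ∈ (add G H).opts :=
  mem_opts_add.mpr (Or.inl ⟨g, hg, rfl⟩)

theorem add_right_mem {h G H : IGame} (hh : h ∈ H.opts) : add G h ∈ (add G H).opts :=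
  mem_opts_add.mpr (Or.inr ⟨h, hh, rfl⟩)

theorem key (G H : IGame) :
    (¬ out G .N → ¬ out H .O → ¬ out (add G H) .O) ∧
    (¬ out G .O → ¬ out H .N → ¬ out (add G H) .O) ∧
    (¬ out G .N → ¬ out H .P → ¬ out (add G H) .P) ∧
    (¬ out G .P → ¬ out H .N → ¬ out (add G H) .P) := by
  refine ⟨?_, ?_, ?_, ?_⟩
  · intro hGN hHO hO
    rw [out_O] at hHO
    push_neg at hHO
    obtain ⟨h, hh, hhN⟩ := hHO
    rw [out_O] at hO
    have hN2 := hO (add G h) (add_right_mem hh)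
    rw [out_N] at hN2
    obtain ⟨x, hx, hxP⟩ := hN2
    rcases mem_opts_add.mp hx with ⟨g', hg', rfl⟩ | ⟨h', hh', rfl⟩
    · rw [out_N] at hGN
      push_neg at hGN
      exact (key g' h).2.2.2 (hGN g' hg') hhN hxP
    · rw [out_N] at hhN
      push_neg at hhN
      exact (key G h').2.2.1 hGN (hhN h' hh') hxP
  · intro hGO hHN hO
    rw [out_O] at hGO
    push_neg at hGO
    obtain ⟨g, hg, hgN⟩ := hGO
    rw [out_O] at hO
    have hN2 := hO (add g H) (add_left_mem hg)
    rw [out_N] at hN2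
    obtain ⟨x, hx, hxP⟩ := hN2
    rcases mem_opts_add.mp hx with ⟨g', hg', rfl⟩ | ⟨h', hh', rfl⟩
    · rw [out_N] at hgN
      push_neg at hgN
      exact (key g' H).2.2.2 (hgN g' hg') hHN hxP
    · rw [out_N] at hHN
      push_neg at hHN
      exact (key g h').2.2.1 hgN (hHN h' hh') hxP
  · intro hGN hHP hP
    rw [out_P] at hHP
    push_neg at hHP
    obtain ⟨h, hh, hhO⟩ := hHP
    rw [out_P] at hP
    exact (key G h).1 hGN hhO (hP (add G h) (add_right_mem hh))
  · intro hGP hHN hP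
    rw [out_P] at hGP
    push_neg at hGP
    obtain ⟨g, hg, hgO⟩ := hGP
    rw [out_P] at hP
    exact (key g H).2.1 hgO hHN (hP (add g H) (add_left_mem hg))
termination_by sizeOf G + sizeOf H
decreasing_by
  · have h1 := sizeOf_lt_of_mem hg'
    have h2 := sizeOf_lt_of_mem hh
    omega
  · have h1 := sizeOf_lt_of_mem hh'
    have h2 := sizeOf_lt_of_mem hh
    omega
  · have h1 := sizeOf_lt_of_mem hg'
    have h2 := sizeOf_lt_of_mem hg
    omega
  · have h1 := sizeOf_lt_of_mem hg
    have h2 := sizeOf_lt_of_mem hh'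
    omega
  · have h1 := sizeOf_lt_of_mem hh
    omega
  · have h1 := sizeOf_lt_of_mem hg
    omega

end IGame

open IGame in
/-- (Other Procreation) If Other has no winning strategy in either `G` or `H`,
then Previous has none in `G+H`. -/
theorem other_procreation (G H : IGame)
    (hG : ¬ out G Player.O) (hH : ¬ out H Player.O) :
    ¬ out (IGame.add G H) Player.P := by
  intro hP
  rw [IGame.out_O] at hG
  push_neg at hG
  obtain ⟨g, hg, hgN⟩ := hG
  rw [IGame.out_P] at hP
  exact (IGame.key g H).1 hgN hH (hP (IGame.add g H) (IGame.add_left_mem hg))
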